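/- Let G be a connected embedded simple graph in which every vertex has degree at least 2. Then every face of size at most 5 is simple, i.e., each vertex occurring in the facial walk of such a face occurs in exactly two directed edges of that face. -/

import Mathlib

/-- A connected oriented combinatorial embedding of a (multi)graph, given by a
finite set of darts (directed edges), a rotation permutation `σ` (next dart in
the cyclic order around the tail vertex) and a fixed-point-free involution `α`
(dart reversal). -/
structure EmbGraph where
  D : Type
  finD : Finite D
  σ : Equiv.Perm D
  α : Equiv.Perm D
  α_invol : ∀ d, α (α d) = d
  α_ne : ∀ d, α d ≠ d

namespace EmbGraph

variable (G : EmbGraph)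

instance : Finite G.D := G.finD

/-- The setoid identifying darts in a common cycle of a permutation. -/
def sameCycleSetoid (f : Equiv.Perm G.D) : Setoid G.D :=
  ⟨f.SameCycle, ⟨fun _ => Equiv.Perm.SameCycle.refl f _, fun h => h.symm, fun h h' => h.trans h'⟩⟩

/-- The face permutation: the successor of the directed edge `(u,v)` in its
facial walk is the next edge after `(v,u)` in the rotation around `v`. -/
def facePerm : Equiv.Perm G.D := G.σ * G.α

/-- Vertices are the orbits of `σ`. -/
def Vert := Quotient (G.sameCycleSetoid G.σ)
/-- Edges are the orbits of `α`. -/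
def Edge := Quotient (G.sameCycleSetoid G.α)
/-- Faces are the orbits of the face permutation. -/
def Face := Quotient (G.sameCycleSetoid G.facePerm)

/-- The tail vertex of a dart. -/
def vtx (d : G.D) : G.Vert := Quotient.mk (G.sameCycleSetoid G.σ) d
def edgeOf (d : G.D) : G.Edge := Quotient.mk (G.sameCycleSetoid G.α) d
def faceOf (d : G.D) : G.Face := Quotient.mk (G.sameCycleSetoid G.facePerm) d

instance : Finite G.Vert := Quotient.finite _
instance : Finite G.Edge := Quotient.finite _
instance : Finite G.Face := Quotient.finite _

noncomputable def numVertices : ℕ := Nat.card G.Vert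
noncomputable def numEdges : ℕ := Nat.card G.Edge
noncomputable def numFaces : ℕ := Nat.card G.Face

/-- The Euler characteristic `v - e + f`; the genus `g` of the embedding is
defined by `v - e + f = 2 - 2g`. -/
noncomputable def eulerChar : ℤ := (G.numVertices : ℤ) - (G.numEdges : ℤ) + (G.numFaces : ℤ)

/-- The embedded graph is connected. -/
def Connected : Prop :=
  ∀ a b : G.D, Relation.EqvGen (fun x y => y = G.σ x ∨ y = G.α x) a b

/-- The degree of a vertex: the number of darts with this tail. -/
noncomputable def degree (v : G.Vert) : ℕ := Nat.card {d : G.D // G.vtx d = v}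

/-- The size of a face: the number of darts in its facial walk. -/
noncomputable def faceSize (f : G.Face) : ℕ := Nat.card {d : G.D // G.faceOf d = f}

/-- The underlying simple graph of the embedded graph. -/
def underlying : SimpleGraph G.Vert where
  Adj u v := u ≠ v ∧ ∃ d, G.vtx d = u ∧ G.vtx (G.α d) = v
  symm := ⟨by
    rintro u v ⟨huv, d, hd1, hd2⟩
    exact ⟨huv.symm, G.α d, hd2, by rw [G.α_invol]; exact hd1⟩⟩
  loopless := ⟨fun v h => h.1 rfl⟩

/-- The embedded graph is a simple graph: no loops and no multiple edges. -/
def IsSimple : Prop :=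
  (∀ d, G.vtx d ≠ G.vtx (G.α d)) ∧
    ∀ d d', G.vtx d = G.vtx d' → G.vtx (G.α d) = G.vtx (G.α d') → G.edgeOf d = G.edgeOf d'

/-- The dual graph: vertices are the faces of `G`, two faces being adjacent
if they share an edge. -/
def dualGraph : SimpleGraph G.Face where
  Adj f f' := f ≠ f' ∧ ∃ d, G.faceOf d = f ∧ G.faceOf (G.α d) = f'
  symm := ⟨by
    rintro f f' ⟨hff, d, hd1, hd2⟩
    exact ⟨hff.symm, G.α d, hd2, by rw [G.α_invol]; exact hd1⟩⟩
  loopless := ⟨fun f h => h.1 rfl⟩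

/-- The dual (multi)graph is simple: no face shares an edge with itself, and no
two faces share more than one edge. -/
def DualSimple : Prop :=
  (∀ d, G.faceOf d ≠ G.faceOf (G.α d)) ∧
    ∀ d d', G.faceOf d = G.faceOf d' → G.faceOf (G.α d) = G.faceOf (G.α d') →
      G.edgeOf d = G.edgeOf d'

/-- The dual embedded graph. -/
def dualMap : EmbGraph :=
  ⟨G.D, G.finD, G.σ * G.α, G.α, G.α_invol, G.α_ne⟩

/-- Identifying the angle following dart `a` with the angle following dart `b`:
the rotation is composed with the transposition of `a` and `b`. -/
noncomputable def identifyAngles (a b : G.D) : EmbGraph :=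
  letI : DecidableEq G.D := Classical.decEq _
  ⟨G.D, G.finD, G.σ * Equiv.swap a b, G.α, G.α_invol, G.α_ne⟩

/-- The H-operation applied to the edge given by the dart `d = (x,y)`, where
`x` and `y` have degree `3`.  With rotations `y,w',v` around `x` and `x,w,v'`
around `y`, it identifies the angle of `v` preceding `x` with the angle of `v'`
preceding `y`, and the angle of `w` following `y` with the angle of `w'`
following `x`, merging `v` with `v'` and `w` with `w'`. -/
noncomputable def Hop (d : G.D) : EmbGraph :=
  (G.identifyAngles (G.σ⁻¹ (G.α (G.σ (G.σ d)))) (G.σ⁻¹ (G.α (G.σ (G.σ (G.α d)))))).identifyAngles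
    (G.α (G.σ (G.α d))) (G.α (G.σ d))

end EmbGraph

/-- `S` is a vertex cut-set of `H`: deleting `S` leaves two vertices with no
path between them. -/
def IsCutSet {W : Type*} (H : SimpleGraph W) (S : Set W) : Prop :=
  ∃ a b : ↥(Sᶜ), ¬ (H.induce Sᶜ).Reachable a b

/-- `H` is `n`-connected: it has more than `n` vertices and no cut-set with
fewer than `n` vertices. -/
def KConnected {W : Type*} (n : ℕ) (H : SimpleGraph W) : Prop :=
  n < Nat.card W ∧ ∀ S : Set W, S.ncard < n → ¬ IsCutSet H S

/-- The set of genera `s` for which a simple `c`-connected embedded graph of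
genus `s` with a simple dual having a vertex cut of size `k` exists. -/
def deltaSet (k c : ℕ) : Set ℕ :=
  {s | ∃ G : EmbGraph, G.Connected ∧ G.IsSimple ∧ KConnected c G.underlying ∧
      G.eulerChar = 2 - 2 * (s : ℤ) ∧ G.DualSimple ∧
      ∃ S : Set G.Face, S.ncard = k ∧ IsCutSet G.dualGraph S}

/-- `δ_k(c)`: the minimum genus of a simple `c`-connected embedded graph whose
simple dual has a vertex cut of size `k`. -/
noncomputable def delta (k c : ℕ) : ℕ := sInf (deltaSet k c)


/-!
Let `φ = σ ∘ α` be the face permutation. Two darts of a face of length at most `5` with a common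
tail are at distance `1` or `2` along the facial walk, in one direction or the other. Distance `1`
means `a` is a loop. At distance `2`, both `α a` and `φ a` run from the head of `a` back to its
tail, so by simplicity they are darts of one edge: either `φ a = α a`, a fixed point of `σ`,
i.e. a vertex of degree `1`, or `φ a = a`, again a loop.
-/

namespace Equiv.Perm

variable {α : Type*} [DecidableEq α] [Fintype α] {f : Perm α} {x y : α}

theorem SameCycle.exists_pow_eq_or_pow_eq (h : f.SameCycle x y) :
    ∃ k ≤ (f.cycleOf x).support.card / 2, (f ^ k) x = y ∨ (f ^ k) y = x := by
  by_cases hx : x ∈ f.support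
  · obtain ⟨i, hi, rfl⟩ := h.exists_pow_eq_of_mem_support hx
    set n := (f.cycleOf x).support.card
    by_cases hin : i ≤ n / 2
    · exact ⟨i, hin, Or.inl (Eq.refl _)⟩
    · refine ⟨n - i, by omega, Or.inr ?_⟩
      have hperiod := pow_mod_card_support_cycleOf_self_apply f n x
      rw [Nat.mod_self, pow_zero, one_apply, eq_comm] at hperiod
      rwa [← mul_apply, ← pow_add, Nat.sub_add_cancel hi.le]
  · obtain rfl := h.eq_of_left (notMem_support.mp hx)
    exact ⟨0, Nat.zero_le _, Or.inl (Eq.refl _)⟩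

end Equiv.Perm

namespace EmbGraph

variable {G : EmbGraph}

theorem vtx_σ (x : G.D) : G.vtx (G.σ x) = G.vtx x :=
  (Quotient.sound (⟨1, rfl⟩ : G.σ.SameCycle x (G.σ x))).symm

theorem vtx_facePerm (x : G.D) : G.vtx (G.facePerm x) = G.vtx (G.α x) :=
  vtx_σ (G.α x)

theorem eq_or_eq_α_of_edgeOf_eq {x y : G.D} (h : G.edgeOf x = G.edgeOf y) :
    y = x ∨ y = G.α x := by
  obtain ⟨n, rfl⟩ := (Quotient.exact h : G.α.SameCycle x y).exists_nat_pow_eq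
  clear h
  induction n with
  | zero => exact Or.inl rfl
  | succ n ih =>
    rw [pow_succ', Equiv.Perm.mul_apply]
    rcases ih with h | h <;> rw [h]
    · exact Or.inr rfl
    · exact Or.inl (G.α_invol x)

theorem σ_apply_ne_self {x : G.D} (hdeg : 2 ≤ G.degree (G.vtx x)) : G.σ x ≠ x := by
  intro hfix
  have hx : ∀ y : {d : G.D // G.vtx d = G.vtx x}, y.1 = x := fun ⟨y, hy⟩ =>
    ((Quotient.exact hy : G.σ.SameCycle y x).eq_of_right hfix)
  have : Subsingleton {d : G.D // G.vtx d = G.vtx x} :=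
    ⟨fun a b => Subtype.ext ((hx a).trans (hx b).symm)⟩
  have := Finite.card_le_one_iff_subsingleton.mpr this
  unfold degree at hdeg
  omega

theorem card_support_cycleOf_facePerm_le_faceSize [DecidableEq G.D] [Fintype G.D] (d : G.D) :
    (G.facePerm.cycleOf d).support.card ≤ G.faceSize (G.faceOf d) := by
  classical
  rw [faceSize, Nat.card_eq_fintype_card, Fintype.card_subtype]
  refine Finset.card_le_card fun x hx => ?_
  rw [Finset.mem_filter]
  exact ⟨Finset.mem_univ x,
    Quotient.sound (Equiv.Perm.mem_support_cycleOf_iff.mp hx).1.symm⟩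

section Simple

variable (hsimple : G.IsSimple) (hdeg : ∀ v : G.Vert, 2 ≤ G.degree v)
include hsimple

theorem vtx_facePerm_ne (a : G.D) : G.vtx (G.facePerm a) ≠ G.vtx a := by
  rw [vtx_facePerm]
  exact (hsimple.1 a).symm

include hdeg

theorem vtx_facePerm_facePerm_ne (a : G.D) :
    G.vtx (G.facePerm (G.facePerm a)) ≠ G.vtx a := by
  intro h
  set e := G.facePerm a
  have hedge : G.edgeOf (G.α a) = G.edgeOf e := hsimple.2 _ _
    (by rw [vtx_facePerm]) (by rw [G.α_invol, ← h, vtx_facePerm])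
  rcases eq_or_eq_α_of_edgeOf_eq hedge with he | he
  · exact σ_apply_ne_self (hdeg _) he
  · rw [G.α_invol] at he
    exact vtx_facePerm_ne hsimple a (congrArg G.vtx he)

theorem vtx_pow_facePerm_ne {k : ℕ} (hk0 : 0 < k) (hk2 : k ≤ 2) (a : G.D) :
    G.vtx ((G.facePerm ^ k) a) ≠ G.vtx a := by
  interval_cases k
  · exact vtx_facePerm_ne hsimple a
  · exact vtx_facePerm_facePerm_ne hsimple hdeg a

theorem eq_of_faceOf_eq_of_vtx_eq {a b : G.D} (hf : G.faceSize (G.faceOf a) ≤ 5)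
    (hface : G.faceOf a = G.faceOf b) (hv : G.vtx a = G.vtx b) : a = b := by
  classical
  have := Fintype.ofFinite G.D
  obtain ⟨k, hk, hreach⟩ :=
    (Quotient.exact hface : G.facePerm.SameCycle a b).exists_pow_eq_or_pow_eq
  have hk2 : k ≤ 2 := by
    have := card_support_cycleOf_facePerm_le_faceSize a
    omega
  rcases Nat.eq_zero_or_pos k with rfl | hk0
  · rcases hreach with h | h
    · exact h
    · exact h.symm
  · rcases hreach with h | h
    · exact absurd (h ▸ hv.symm) (vtx_pow_facePerm_ne hsimple hdeg hk0 hk2 a)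
    · exact absurd (h ▸ hv) (vtx_pow_facePerm_ne hsimple hdeg hk0 hk2 b)

end Simple

end EmbGraph

theorem small_faces_are_simple_general
    (G : EmbGraph) (hsimple : G.IsSimple)
    (hdeg : ∀ v : G.Vert, 2 ≤ G.degree v)
    (f : G.Face) (hf : G.faceSize f ≤ 5) :
    ∀ v : G.Vert, Nat.card {d : G.D // G.faceOf d = f ∧ G.vtx d = v} ≤ 1 := by
  intro v
  refine Finite.card_le_one_iff_subsingleton.mpr
    ⟨fun ⟨a, haf, hav⟩ ⟨b, hbf, hbv⟩ => Subtype.ext ?_⟩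
  exact EmbGraph.eq_of_faceOf_eq_of_vtx_eq hsimple hdeg (haf ▸ hf)
    (haf.trans hbf.symm) (hav.trans hbv.symm)

/-- in a connected embedded simple graph with minimum degree at
least `2`, every face of size at most `5` is simple: each vertex occurs at most
once as a tail (equivalently, in exactly two directed edges) in its facial walk. -/
theorem small_faces_are_simple
    (G : EmbGraph) (hconn : G.Connected) (hsimple : G.IsSimple)
    (hdeg : ∀ v : G.Vert, 2 ≤ G.degree v)
    (f : G.Face) (hf : G.faceSize f ≤ 5) :
    ∀ v : G.Vert, Nat.card {d : G.D // G.faceOf d = f ∧ G.vtx d = v} ≤ 1 :=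
  small_faces_are_simple_general G hsimple hdeg f hf
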